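/- Let 𝒰 be a cube partition of ℕ⁺ with cube colouring c_𝒰. If P = v₀v₁v₂... is an infinite directed path all of whose edges have colour r+1, then the sequence of indices of the partition classes containing v₀, v₁, v₂, ... is non-decreasing in the lexicographic order on ∏ᵢ{0,...,ℓᵢ−1}; consequently, all but finitely many vertices of P lie in a single partition class. -/

import Mathlib

/-- `k` is the least index at which the tuples `a` and `b` differ. -/
def LeastDiff {r : ℕ} {ℓ : Fin r → ℕ} (a b : ∀ i, Fin (ℓ i)) (k : Fin r) : Prop :=
  a k ≠ b k ∧ ∀ k' : Fin r, k' < k → a k' = b k'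

/-- `c` is the cube colouring associated to the cube partition whose classes are
the fibres of `f`. -/
def IsCubeColouring {r : ℕ} {ℓ : Fin r → ℕ} (f : ℕ → ∀ i, Fin (ℓ i))
    (c : ℕ → ℕ → Fin (r + 1)) : Prop :=
  ∀ m n : ℕ, m ≠ n →
    (f m = f n → c m n = Fin.last r) ∧
    ∀ k : Fin r, LeastDiff (f m) (f n) k →
      (f m k < f n k → c m n = Fin.last r) ∧
      (f n k < f m k → c m n = k.castSucc)

/-- `a ≤ b` in the lexicographic order on the cube `∏ i, {0, …, ℓ i - 1}`. -/
def LexLE {r : ℕ} {ℓ : Fin r → ℕ} (a b : ∀ i, Fin (ℓ i)) : Prop :=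
  a = b ∨ ∃ k : Fin r, a k < b k ∧ ∀ k' : Fin r, k' < k → a k' = b k'

/-! A step from class `a` down to a lexicographically smaller class `b`, first differing at `k`,
has colour `k ≠ r + 1`, so the classes along a path in colour `r + 1` increase lexicographically;
a monotone sequence in the finite cube is eventually constant. -/

section

variable {r : ℕ} {ℓ : Fin r → ℕ}

theorem lexLE_iff_toLex_le {a b : ∀ i, Fin (ℓ i)} : LexLE a b ↔ toLex a ≤ toLex b := by
  rw [le_iff_eq_or_lt, LexLE, toLex_inj]
  exact or_congr_right ⟨fun ⟨k, hlt, heq⟩ => ⟨k, heq, hlt⟩, fun ⟨k, heq, hlt⟩ => ⟨k, hlt, heq⟩⟩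

theorem IsCubeColouring.lexLE_of_eq_last {f : ℕ → ∀ i, Fin (ℓ i)} {c : ℕ → ℕ → Fin (r + 1)}
    (hc : IsCubeColouring f c) {m n : ℕ} (hmn : c m n = Fin.last r) : LexLE (f m) (f n) := by
  rw [lexLE_iff_toLex_le]
  by_contra! hlt
  obtain ⟨k, hbelow, hk⟩ := hlt
  have hm_ne_n : m ≠ n := by
    rintro rfl
    exact hk.false
  have hleast : LeastDiff (f m) (f n) k := ⟨hk.ne', fun k' hk' => (hbelow k' hk').symm⟩
  have hcolour : c m n = k.castSucc := ((hc m n hm_ne_n).2 k hleast).2 hk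
  exact (Fin.castSucc_lt_last k).ne (hcolour.symm.trans hmn)

theorem exists_eventually_eq_of_monotone_toLex {f : ℕ → ∀ i, Fin (ℓ i)}
    (hf : Monotone (toLex ∘ f)) : ∃ x N, ∀ n ≥ N, f n = x := by
  obtain ⟨N, hN⟩ := WellFoundedGT.monotone_chain_condition ⟨toLex ∘ f, hf⟩
  exact ⟨f N, N, fun n hn => (toLex_inj.mp (hN n hn)).symm⟩

end

theorem stmt12 (r : ℕ) (ℓ : Fin r → ℕ) (f : ℕ → ∀ i, Fin (ℓ i))
    (c : ℕ → ℕ → Fin (r + 1)) (hc : IsCubeColouring f c)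
    (v : ℕ → ℕ)
    (hcol : ∀ i : ℕ, c (v i) (v (i + 1)) = Fin.last r) :
    (∀ n : ℕ, LexLE (f (v n)) (f (v (n + 1)))) ∧
    ∃ (x : ∀ i, Fin (ℓ i)) (N : ℕ), ∀ n ≥ N, f (v n) = x :=
  have step : ∀ n, LexLE (f (v n)) (f (v (n + 1))) := fun n => hc.lexLE_of_eq_last (hcol n)
  ⟨step, exists_eventually_eq_of_monotone_toLex
    (monotone_nat_of_le_succ fun n => lexLE_iff_toLex_le.mp (step n))⟩
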